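/- Every search game with solitary-search dominant payoffs admits a location-maximizing pure Nash equilibrium, i.e., an equilibrium s such that for every pure profile s', the number of locations ω with m_s(ω) ≥ 1 is at least the number with m_{s'}(ω) ≥ 1. -/

import Mathlib

open scoped Classical
noncomputable section

variable {N Ω : Type}

/-- `P` is a partition of the finite type `Ω` into nonempty, pairwise disjoint cells. -/
def IsPartition [Fintype Ω] [DecidableEq Ω] (P : Finset (Finset Ω)) : Prop :=
  (∀ π ∈ P, π.Nonempty) ∧
  (∀ π ∈ P, ∀ π' ∈ P, π ≠ π' → Disjoint π π') ∧
  (∀ ω : Ω, ∃ π ∈ P, ω ∈ π)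

/-- `f` is a valid strategy for player `i`: in every cell it searches a subset of
the cell of size at most the capacity `K i`. -/
def ValidFor [DecidableEq Ω] (Part : N → Finset (Finset Ω)) (K : N → ℕ) (i : N)
    (f : Finset Ω → Finset Ω) : Prop :=
  ∀ π ∈ Part i, f π ⊆ π ∧ (f π).card ≤ K i

/-- A valid pure strategy profile. -/
def ValidStrat [DecidableEq Ω] (Part : N → Finset (Finset Ω)) (K : N → ℕ)
    (s : N → Finset Ω → Finset Ω) : Prop :=
  ∀ i, ValidFor Part K i (s i)

/-- Player `i` searches location `ω` under profile `s` (when the prize is at `ω`). -/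
def searchesAt (Part : N → Finset (Finset Ω)) (s : N → Finset Ω → Finset Ω)
    (i : N) (ω : Ω) : Prop :=
  ∃ π ∈ Part i, ω ∈ π ∧ ω ∈ s i π

/-- Location `ω` is searched by some player under profile `s`. -/
def searched (Part : N → Finset (Finset Ω)) (s : N → Finset Ω → Finset Ω)
    (ω : Ω) : Prop :=
  ∃ i, searchesAt Part s i ω

/-- The number of players searching `ω` under `s`. -/
def mcount [Fintype N] (Part : N → Finset (Finset Ω))
    (s : N → Finset Ω → Finset Ω) (ω : Ω) : ℕ :=
  (Finset.univ.filter fun i => searchesAt Part s i ω).card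

noncomputable section

/-- Expected payoff of player `i` under profile `s`: for each location `ω`
(weighted by the prior `μ`), the reward `v i m ω` if `i` searches `ω` when `m`
players search there, minus the search cost `c i k` for searching `k` locations
in the realized cell. -/
def payoff {N Ω : Type} [Fintype N] [Fintype Ω] [DecidableEq Ω]
    (Part : N → Finset (Finset Ω)) (μ : Ω → ℝ) (c : N → ℕ → ℝ)
    (v : N → ℕ → Ω → ℝ) (i : N) (s : N → Finset Ω → Finset Ω) : ℝ :=
  ∑ ω : Ω, μ ω *
    ((if searchesAt Part s i ω then v i (mcount Part s ω) ω else 0)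
      - ∑ π ∈ (Part i).filter (fun π => ω ∈ π), c i ((s i π).card))

/-- A (pure Bayesian) Nash equilibrium: a valid profile from which no player
has a profitable unilateral deviation to another valid strategy. -/
def IsNash {N Ω : Type} [Fintype N] [DecidableEq N] [Fintype Ω] [DecidableEq Ω]
    (Part : N → Finset (Finset Ω)) (K : N → ℕ) (μ : Ω → ℝ) (c : N → ℕ → ℝ)
    (v : N → ℕ → Ω → ℝ) (s : N → Finset Ω → Finset Ω) : Prop :=
  ValidStrat Part K s ∧
  ∀ (i : N) (t : Finset Ω → Finset Ω), ValidFor Part K i t →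
    payoff Part μ c v i (Function.update s i t) ≤ payoff Part μ c v i s

end

/-!
A player's payoff is a sum over the cells of its partition, and in each cell it chooses at most
`K i` locations, each worth its prior-weighted reward given the other searchers, against a convex
cost. Such a choice is optimal as soon as no single addition, removal or exchange improves it.

Solitary-search dominance makes every location nobody else searches worth more than any shared
location and than any marginal cost. Hence, among the profiles in which no location is searched
twice, one that covers the most locations and then maximizes `∑ μ u * v i 1 u` is an equilibrium
once each player's capacity in a cell is cut down to the number of locations it searches there.

The capacities are then restored one unit at a time, as in Milchtaich's argument for
player-specific congestion games. The player with the new unit adds its best location, if any;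
the extra searcher there may make another searcher of that location exchange it for a new one,
which moves the extra searcher on. Measured at the occupancy `n` before the new unit,
`∑ μ u * v i (n u + 1) u` increases with every such exchange, so the process stops at an
equilibrium, and every location searched at the start is still searched at the end.
-/

section DiscreteConvexity

variable {g : ℕ → ℝ}

lemma sub_le_card_mul_of_monotone_sub (hg : Monotone fun k => g (k + 1) - g k)
    {j k : ℕ} (hjk : j ≤ k) : g k - g j ≤ ((k - j : ℕ) : ℝ) * (g k - g (k - 1)) := by
  rw [← Finset.sum_Ico_sub g hjk, ← Nat.card_Ico j k, ← nsmul_eq_mul]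
  refine Finset.sum_le_card_nsmul _ _ _ fun i hi => ?_
  have hik : i + 1 ≤ k := (Finset.mem_Ico.mp hi).2
  simpa [Nat.sub_add_cancel (le_trans (Nat.le_add_left 1 i) hik)] using
    hg (Nat.le_sub_one_of_lt hik)

lemma card_mul_le_sub_of_monotone_sub (hg : Monotone fun k => g (k + 1) - g k)
    {j k : ℕ} (hkj : k ≤ j) : ((j - k : ℕ) : ℝ) * (g (k + 1) - g k) ≤ g j - g k := by
  rw [← Finset.sum_Ico_sub g hkj, ← Nat.card_Ico k j, ← nsmul_eq_mul]
  exact Finset.card_nsmul_le_sum _ _ _ fun i hi => hg (Finset.mem_Ico.mp hi).1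

end DiscreteConvexity

section CellOptimization

variable {α : Type*} {π S T : Finset α} {κ : ℕ} {b b' : α → ℝ} {g : ℕ → ℝ} {τ : α}

def cellValue (b : α → ℝ) (g : ℕ → ℝ) (T : Finset α) : ℝ := ∑ u ∈ T, b u - g T.card

structure IsCellOptimal (π : Finset α) (κ : ℕ) (b : α → ℝ) (g : ℕ → ℝ) (S : Finset α) :
    Prop where
  subset : S ⊆ π
  card_le : S.card ≤ κ
  le : ∀ T ⊆ π, T.card ≤ κ → cellValue b g T ≤ cellValue b g S

structure IsLocallyCellOptimal (π : Finset α) (κ : ℕ) (b : α → ℝ) (g : ℕ → ℝ)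
    (S : Finset α) : Prop where
  subset : S ⊆ π
  card_le : S.card ≤ κ
  keep : ∀ u ∈ S, g S.card - g (S.card - 1) ≤ b u
  grow : S.card < κ → ∀ w ∈ π, w ∉ S → b w ≤ g (S.card + 1) - g S.card
  exchange : ∀ u ∈ S, ∀ w ∈ π, w ∉ S → b w ≤ b u

section InsertErase

variable [DecidableEq α] {w : α}

lemma card_insert_erase (hτS : τ ∈ S) (hwS : w ∉ S) : (insert w (S.erase τ)).card = S.card := by
  rw [Finset.card_insert_of_notMem fun h => hwS (Finset.mem_of_mem_erase h),
    Finset.card_erase_add_one hτS]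

lemma sum_insert_erase (hτS : τ ∈ S) (hwS : w ∉ S) (f : α → ℝ) :
    ∑ x ∈ insert w (S.erase τ), f x = ∑ x ∈ S, f x + f w - f τ := by
  rw [Finset.sum_insert fun h => hwS (Finset.mem_of_mem_erase h), ← Finset.sum_erase_add S f hτS]
  ring

lemma cellValue_insert_erase (hτS : τ ∈ S) (hwS : w ∉ S) :
    cellValue b g (insert w (S.erase τ)) = cellValue b g S + b w - b τ := by
  rw [cellValue, cellValue, sum_insert_erase hτS hwS, card_insert_erase hτS hwS]
  ring

end InsertErase

lemma cellValue_sub_cellValue_le [DecidableEq α] {θ : ℝ} (hB : ∀ w ∈ T \ S, b w ≤ θ)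
    (hA : ∀ u ∈ S \ T, θ ≤ b u) : cellValue b g T - cellValue b g S ≤
      ((T.card : ℝ) - S.card) * θ - (g T.card - g S.card) := by
  have h₁ := Finset.sum_le_card_nsmul (T \ S) b θ hB
  have h₂ := Finset.card_nsmul_le_sum (S \ T) b θ hA
  rw [nsmul_eq_mul] at h₁ h₂
  have hcard : ((T \ S).card : ℝ) + S.card = (S \ T).card + T.card := by
    exact_mod_cast (by grind : (T \ S).card + S.card = (S \ T).card + T.card)
  have hθcard : ((T \ S).card : ℝ) * θ = (S \ T).card * θ + (T.card - S.card) * θ := by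
    linear_combination θ * hcard
  rw [cellValue, cellValue]
  linarith [Finset.sum_sdiff_sub_sum_sdiff (s₁ := S) (s₂ := T) (f := b)]

lemma IsLocallyCellOptimal.cellValue_le_of_card_le [DecidableEq α]
    (hg : Monotone fun k => g (k + 1) - g k) (h : IsLocallyCellOptimal π κ b g S) (hT : T ⊆ π)
    (hle : T.card ≤ S.card) :
    cellValue b g T ≤ cellValue b g S := by
  -- `θ` is the smallest value dropped from `S`, or the last marginal cost if none is dropped
  obtain ⟨θ, hθB, hθA, hθ⟩ : ∃ θ, (∀ w ∈ T \ S, b w ≤ θ) ∧ (∀ u ∈ S \ T, θ ≤ b u) ∧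
      g S.card - g (S.card - 1) ≤ θ := by
    rcases (S \ T).eq_empty_or_nonempty with hA | hA
    · have hB := Finset.card_sdiff_le_card_sdiff_iff.mpr hle
      rw [hA, Finset.card_empty, Nat.le_zero, Finset.card_eq_zero] at hB
      exact ⟨_, by simp [hB], by simp [hA], le_rfl⟩
    · refine ⟨(S \ T).inf' hA b, fun w hw => Finset.le_inf' hA b fun u hu => ?_,
        fun u hu => Finset.inf'_le b hu,
        Finset.le_inf' hA b fun u hu => h.keep u (Finset.mem_sdiff.mp hu).1⟩
      exact h.exchange u (Finset.mem_sdiff.mp hu).1 w (hT (Finset.mem_sdiff.mp hw).1)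
        (Finset.mem_sdiff.mp hw).2
  have hconv := sub_le_card_mul_of_monotone_sub hg hle
  push_cast [hle] at hconv
  have hST : (T.card : ℝ) ≤ S.card := by exact_mod_cast hle
  nlinarith [cellValue_sub_cellValue_le (g := g) hθB hθA,
    mul_le_mul_of_nonneg_left hθ (sub_nonneg.mpr hST)]

lemma IsLocallyCellOptimal.cellValue_le_of_card_lt [DecidableEq α]
    (hg : Monotone fun k => g (k + 1) - g k) (h : IsLocallyCellOptimal π κ b g S) (hT : T ⊆ π)
    (hTκ : T.card ≤ κ)
    (hlt : S.card < T.card) : cellValue b g T ≤ cellValue b g S := by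
  have hB := Finset.sdiff_nonempty_of_card_lt_card hlt
  have hθ : (T \ S).sup' hB b ≤ g (S.card + 1) - g S.card := Finset.sup'_le hB b fun w hw =>
    h.grow (lt_of_lt_of_le hlt hTκ) w (hT (Finset.mem_sdiff.mp hw).1) (Finset.mem_sdiff.mp hw).2
  have hconv := card_mul_le_sub_of_monotone_sub hg hlt.le
  push_cast [hlt.le] at hconv
  have hST : (S.card : ℝ) ≤ T.card := by exact_mod_cast hlt.le
  nlinarith [cellValue_sub_cellValue_le (g := g) (fun w hw => Finset.le_sup' b hw)
    fun u hu => Finset.sup'_le hB b fun w hw => h.exchange u (Finset.mem_sdiff.mp hu).1 w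
      (hT (Finset.mem_sdiff.mp hw).1) (Finset.mem_sdiff.mp hw).2,
    mul_le_mul_of_nonneg_left hθ (sub_nonneg.mpr hST)]

lemma IsLocallyCellOptimal.isCellOptimal [DecidableEq α] (hg : Monotone fun k => g (k + 1) - g k)
    (h : IsLocallyCellOptimal π κ b g S) : IsCellOptimal π κ b g S :=
  ⟨h.subset, h.card_le, fun T hT hTκ => (le_or_gt T.card S.card).elim
    (h.cellValue_le_of_card_le hg hT) (h.cellValue_le_of_card_lt hg hT hTκ)⟩

lemma IsCellOptimal.isLocallyCellOptimal [DecidableEq α] (h : IsCellOptimal π κ b g S) :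
    IsLocallyCellOptimal π κ b g S := by
  refine ⟨h.subset, h.card_le, fun u hu => ?_, fun hlt w hw hwS => ?_, fun u hu w hw hwS => ?_⟩
  · have := h.le (S.erase u) ((S.erase_subset u).trans h.subset)
      ((Finset.card_le_card (S.erase_subset u)).trans h.card_le)
    rw [cellValue, cellValue, Finset.card_erase_of_mem hu, ← Finset.sum_erase_add S b hu] at this
    linarith
  · have := h.le (insert w S) (Finset.insert_subset hw h.subset)
      (by rw [Finset.card_insert_of_notMem hwS]; omega)
    rw [cellValue, cellValue, Finset.card_insert_of_notMem hwS, Finset.sum_insert hwS] at this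
    linarith
  · have := h.le (insert w (S.erase u))
      (Finset.insert_subset hw ((S.erase_subset u).trans h.subset))
      ((card_insert_erase hu hwS).trans_le h.card_le)
    rw [cellValue_insert_erase hu hwS] at this
    linarith

lemma IsCellOptimal.mono [DecidableEq α] (hg : Monotone fun k => g (k + 1) - g k)
    (h : IsCellOptimal π κ b g S)
    (hS : ∀ u ∈ S, b u ≤ b' u) (hR : ∀ w ∈ π, w ∉ S → b' w ≤ b w) :
    IsCellOptimal π κ b' g S := by
  have h := h.isLocallyCellOptimal
  refine IsLocallyCellOptimal.isCellOptimal hg ⟨h.subset, h.card_le,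
    fun u hu => (h.keep u hu).trans (hS u hu), fun hlt w hw hwS => ?_,
    fun u hu w hw hwS => ?_⟩
  · exact (hR w hw hwS).trans (h.grow hlt w hw hwS)
  · exact (hR w hw hwS).trans ((h.exchange u hu w hw hwS).trans (hS u hu))

lemma cellValue_congr (hT : T ⊆ π) (hb : ∀ u ∈ π, b u = b' u) :
    cellValue b g T = cellValue b' g T := by
  rw [cellValue, cellValue, Finset.sum_congr rfl fun u hu => hb u (hT hu)]

lemma IsCellOptimal.congr (h : IsCellOptimal π κ b g S) (hb : ∀ u ∈ π, b u = b' u) :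
    IsCellOptimal π κ b' g S :=
  ⟨h.subset, h.card_le, fun T hT hTκ => by
    rw [← cellValue_congr hT hb, ← cellValue_congr h.subset hb]; exact h.le T hT hTκ⟩

lemma exists_max_of_mem_sdiff [DecidableEq α] {w₀ : α} (hw₀ : w₀ ∈ π) (hw₀S : w₀ ∉ S) :
    ∃ w ∈ π, w ∉ S ∧ ∀ x ∈ π, x ∉ S → b x ≤ b w := by
  obtain ⟨w, hw, hmax⟩ :=
    Finset.exists_max_image (π \ S) b ⟨w₀, Finset.mem_sdiff.mpr ⟨hw₀, hw₀S⟩⟩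
  exact ⟨w, (Finset.mem_sdiff.mp hw).1, (Finset.mem_sdiff.mp hw).2,
    fun x hx hxS => hmax x (Finset.mem_sdiff.mpr ⟨hx, hxS⟩)⟩

lemma IsCellOptimal.exists_succ [DecidableEq α] (hg : Monotone fun k => g (k + 1) - g k)
    (h : IsCellOptimal π κ b g S) : ∃ S', IsCellOptimal π (κ + 1) b g S' ∧
      (S' = S ∨ ∃ w ∈ π, w ∉ S ∧ S' = insert w S) := by
  have h := h.isLocallyCellOptimal
  by_cases hstay : S.card < κ ∨ ∀ w ∈ π, w ∉ S → b w ≤ g (S.card + 1) - g S.card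
  · refine ⟨S, IsLocallyCellOptimal.isCellOptimal hg ⟨h.subset, h.card_le.trans κ.le_succ,
      h.keep, fun _ w hw hwS => ?_, h.exchange⟩, Or.inl rfl⟩
    rcases hstay with hlt | hle
    exacts [h.grow hlt w hw hwS, hle w hw hwS]
  push Not at hstay
  obtain ⟨hκ, w₀, hw₀, hw₀S, hw₀b⟩ := hstay
  obtain ⟨w, hw, hwS, hmax⟩ := exists_max_of_mem_sdiff (b := b) hw₀ hw₀S
  have hcard : (insert w S).card = κ + 1 := by
    rw [Finset.card_insert_of_notMem hwS]; have := h.card_le; omega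
  have hcost : g (κ + 1) - g κ < b w := by
    have := hmax w₀ hw₀ hw₀S
    rw [show S.card = κ by have := h.card_le; omega] at hw₀b
    linarith
  refine ⟨insert w S, IsLocallyCellOptimal.isCellOptimal hg ⟨Finset.insert_subset hw h.subset,
    hcard.le, fun u hu => ?_, fun hlt => absurd hlt (by omega), fun u hu x hx hxS => ?_⟩,
    Or.inr ⟨w, hw, hwS, rfl⟩⟩
  · rw [hcard, Nat.add_sub_cancel]
    rcases Finset.mem_insert.mp hu with rfl | hu
    exacts [hcost.le, hcost.le.trans (h.exchange u hu w hw hwS)]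
  · have hxS' : x ∉ S := fun h' => hxS (Finset.mem_insert_of_mem h')
    rcases Finset.mem_insert.mp hu with rfl | hu
    exacts [hmax x hx hxS', h.exchange u hu x hx hxS']

lemma IsLocallyCellOptimal.update_keep (h : IsLocallyCellOptimal π κ b g S) (hτS : τ ∈ S)
    (hb : ∀ u ∈ π, u ≠ τ → b' u = b u) (hτ : g S.card - g (S.card - 1) ≤ b' τ)
    (hR : ∀ w ∈ π, w ∉ S → b w ≤ b' τ) : IsLocallyCellOptimal π κ b' g S := by
  have hb' : ∀ w ∈ π, w ∉ S → b' w = b w := fun w hw hwS =>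
    hb w hw fun h' => hwS (h' ▸ hτS)
  refine ⟨h.subset, h.card_le, fun u hu => ?_, fun hlt w hw hwS => ?_, fun u hu w hw hwS => ?_⟩
  · rcases eq_or_ne u τ with rfl | hne
    exacts [hτ, (hb u (h.subset hu) hne).symm ▸ h.keep u hu]
  · exact (hb' w hw hwS).symm ▸ h.grow hlt w hw hwS
  · rw [hb' w hw hwS]
    rcases eq_or_ne u τ with rfl | hne
    exacts [hR w hw hwS, (hb u (h.subset hu) hne).symm ▸ h.exchange u hu w hw hwS]

lemma IsLocallyCellOptimal.update_erase [DecidableEq α] (hg : Monotone fun k => g (k + 1) - g k)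
    (h : IsLocallyCellOptimal π κ b g S) (hτS : τ ∈ S) (hb : ∀ u ∈ π, u ≠ τ → b' u = b u)
    (hτ : b' τ < g S.card - g (S.card - 1))
    (hR : ∀ w ∈ π, w ∉ S → b w < g S.card - g (S.card - 1)) :
    IsLocallyCellOptimal π κ b' g (S.erase τ) := by
  have hcard : (S.erase τ).card + 1 = S.card := Finset.card_erase_add_one hτS
  have hbelow : ∀ x ∈ π, x ∉ S.erase τ → b' x < g S.card - g (S.card - 1) := by
    intro x hx hxS
    rcases eq_or_ne x τ with rfl | hne
    · exact hτ
    · rw [hb x hx hne]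
      exact hR x hx fun h' => hxS (Finset.mem_erase.mpr ⟨hne, h'⟩)
  refine ⟨(S.erase_subset τ).trans h.subset, (Finset.card_le_card (S.erase_subset τ)).trans
    h.card_le, fun u hu => ?_, fun _ x hx hxS => ?_, fun u hu x hx hxS => ?_⟩
  · obtain ⟨hne, hu⟩ := Finset.mem_erase.mp hu
    rw [hb u (h.subset hu) hne]
    refine le_trans ?_ (h.keep u hu)
    obtain ⟨m, hm⟩ : ∃ m, S.card = m + 2 := ⟨S.card - 2, by
      have := Finset.card_pos.mpr ⟨u, Finset.mem_erase.mpr ⟨hne, hu⟩⟩; omega⟩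
    rw [show (S.erase τ).card = m + 1 by omega, hm]
    simpa using hg m.le_succ
  · rw [← hcard, Nat.add_sub_cancel] at hbelow
    exact (hbelow x hx hxS).le
  · obtain ⟨hne, hu⟩ := Finset.mem_erase.mp hu
    rw [hb u (h.subset hu) hne]
    exact (hbelow x hx hxS).le.trans (h.keep u hu)

lemma IsLocallyCellOptimal.update_swap [DecidableEq α] (h : IsLocallyCellOptimal π κ b g S)
    (hτS : τ ∈ S) (hb : ∀ u ∈ π, u ≠ τ → b' u = b u) {w : α} (hw : w ∈ π) (hwS : w ∉ S)
    (hmax : ∀ x ∈ π, x ∉ S → b x ≤ b w) (hwcost : g S.card - g (S.card - 1) ≤ b w)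
    (hτ : b' τ < b w) : IsLocallyCellOptimal π κ b' g (insert w (S.erase τ)) := by
  have hcard := card_insert_erase hτS hwS
  have hwτ : w ≠ τ := fun h' => hwS (h' ▸ hτS)
  have hchosen : ∀ u ∈ insert w (S.erase τ), b w ≤ b' u ∧ g S.card - g (S.card - 1) ≤ b' u := by
    intro u hu
    rcases Finset.mem_insert.mp hu with rfl | hu
    · rw [hb u hw hwτ]; exact ⟨le_rfl, hwcost⟩
    · obtain ⟨hne, hu⟩ := Finset.mem_erase.mp hu
      rw [hb u (h.subset hu) hne]
      exact ⟨h.exchange u hu w hw hwS, h.keep u hu⟩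
  have hlow : ∀ x ∈ π, x ∉ insert w (S.erase τ) → b' x ≤ b w := by
    intro x hx hxS'
    by_cases hxτ : x = τ
    · exact hxτ ▸ hτ.le
    · have hxS : x ∉ S := fun hxS =>
        hxS' (Finset.mem_insert_of_mem (Finset.mem_erase.mpr ⟨hxτ, hxS⟩))
      rw [hb x hx hxτ]
      exact hmax x hx hxS
  refine ⟨Finset.insert_subset hw ((S.erase_subset τ).trans h.subset), hcard.le.trans h.card_le,
    fun u hu => hcard ▸ (hchosen u hu).2, fun hlt x hx hxS' => ?_,
    fun u hu x hx hxS' => (hlow x hx hxS').trans (hchosen u hu).1⟩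
  rw [hcard] at hlt ⊢
  exact (hlow x hx hxS').trans (h.grow hlt w hw hwS)

lemma IsCellOptimal.exists_of_update [DecidableEq α] (hg : Monotone fun k => g (k + 1) - g k)
    (h : IsCellOptimal π κ b g S) (hτS : τ ∈ S) (hb : ∀ u ∈ π, u ≠ τ → b' u = b u) :
    ∃ S', IsCellOptimal π κ b' g S' ∧
      (S' = S ∨ S' = S.erase τ ∨ ∃ w ∈ π, w ∉ S ∧ S' = insert w (S.erase τ)) := by
  have h := h.isLocallyCellOptimal
  by_cases hkeep : g S.card - g (S.card - 1) ≤ b' τ ∧ ∀ w ∈ π, w ∉ S → b w ≤ b' τ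
  · exact ⟨S, (h.update_keep hτS hb hkeep.1 hkeep.2).isCellOptimal hg, Or.inl rfl⟩
  by_cases hdrop : ∀ w ∈ π, w ∉ S → b w < g S.card - g (S.card - 1)
  · have hτ : b' τ < g S.card - g (S.card - 1) := by
      by_contra hτ
      push Not at hτ
      exact hkeep ⟨hτ, fun w hw hwS => ((hdrop w hw hwS).trans_le hτ).le⟩
    exact ⟨S.erase τ, (h.update_erase hg hτS hb hτ hdrop).isCellOptimal hg, Or.inr (Or.inl rfl)⟩
  push Not at hdrop
  obtain ⟨w₀, hw₀, hw₀S, hw₀b⟩ := hdrop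
  obtain ⟨w, hw, hwS, hmax⟩ := exists_max_of_mem_sdiff (b := b) hw₀ hw₀S
  have hτ : b' τ < b w := by
    by_contra hτ
    push Not at hτ
    exact hkeep ⟨(hw₀b.trans (hmax w₀ hw₀ hw₀S)).trans hτ,
      fun x hx hxS => (hmax x hx hxS).trans hτ⟩
  exact ⟨insert w (S.erase τ), (h.update_swap hτS hb hw hwS hmax
    (hw₀b.trans (hmax w₀ hw₀ hw₀S)) hτ).isCellOptimal hg, Or.inr (Or.inr ⟨w, hw, hwS, rfl⟩)⟩

end CellOptimization

section Partition

variable {Ω : Type} [Fintype Ω] [DecidableEq Ω] {P : Finset (Finset Ω)} {π ρ : Finset Ω} {u : Ω}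

lemma IsPartition.eq_of_mem (hP : IsPartition P) (hπ : π ∈ P) (hρ : ρ ∈ P) (hu : u ∈ π)
    (hu' : u ∈ ρ) : π = ρ := by
  by_contra hne
  exact Finset.disjoint_left.mp (hP.2.1 π hπ ρ hρ hne) hu hu'

lemma IsPartition.filter_mem_eq (hP : IsPartition P) (hπ : π ∈ P) (hu : u ∈ π) :
    P.filter (fun ρ => u ∈ ρ) = {π} := by
  ext ρ
  simp only [Finset.mem_filter, Finset.mem_singleton]
  exact ⟨fun h => hP.eq_of_mem h.1 hπ h.2 hu, fun h => h ▸ ⟨hπ, hu⟩⟩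

lemma IsPartition.sum_eq_sum_sum {M : Type*} [AddCommMonoid M] (hP : IsPartition P)
    (f : Ω → M) : ∑ ω, f ω = ∑ π ∈ P, ∑ ω ∈ π, f ω := by
  rw [← Finset.sum_biUnion fun π hπ ρ hρ hne => hP.2.1 π hπ ρ hρ hne]
  congr 1
  ext ω
  simpa using hP.2.2 ω

end Partition

namespace SearchGame

section Profiles

variable {N Ω : Type} {Part : N → Finset (Finset Ω)} {s t : N → Finset Ω → Finset Ω} {i j : N}
  {π ρ S T : Finset Ω} {u : Ω}

lemma searchesAt_iff_mem [Fintype Ω] [DecidableEq Ω] (hP : IsPartition (Part i))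
    (hπ : π ∈ Part i) (hu : u ∈ π) : searchesAt Part s i u ↔ u ∈ s i π :=
  ⟨fun ⟨_, hρ, huρ, hs⟩ => hP.eq_of_mem hπ hρ hu huρ ▸ hs, fun hs => ⟨π, hπ, hu, hs⟩⟩

section UpdateCell

variable [DecidableEq N] [DecidableEq Ω]

def updateCell {β : Type*} (f : N → Finset Ω → β) (i : N) (π : Finset Ω) (x : β) :
    N → Finset Ω → β :=
  Function.update f i (Function.update (f i) π x)

variable {β : Type*} {f : N → Finset Ω → β} {x y : β}

@[simp] lemma updateCell_same : updateCell f i π x i π = x := by simp [updateCell]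

lemma updateCell_of_ne (h : ¬(j = i ∧ ρ = π)) : updateCell f i π x j ρ = f j ρ := by
  by_cases hj : j = i
  · subst hj
    simp [updateCell, Function.update_of_ne (fun h' => h ⟨rfl, h'⟩)]
  · simp [updateCell, Function.update_of_ne hj]

@[simp] lemma updateCell_eq_self : updateCell f i π (f i π) = f := by simp [updateCell]

@[simp] lemma updateCell_updateCell :
    updateCell (updateCell f i π x) i π y = updateCell f i π y := by
  simp [updateCell]

end UpdateCell

section Occupancy

variable [Fintype N] [DecidableEq N]

def othersAt (Part : N → Finset (Finset Ω)) (s : N → Finset Ω → Finset Ω) (i : N) (u : Ω) : ℕ :=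
  ((Finset.univ.erase i).filter fun j => searchesAt Part s j u).card

lemma mcount_eq_othersAt_add :
    mcount Part s u = othersAt Part s i u + if searchesAt Part s i u then 1 else 0 := by
  simp only [mcount, othersAt, Finset.card_filter]
  rw [← Finset.add_sum_erase _ _ (Finset.mem_univ i), add_comm]

lemma othersAt_update (σ : Finset Ω → Finset Ω) :
    othersAt Part (Function.update s i σ) i u = othersAt Part s i u := by
  unfold othersAt
  congr 1
  refine Finset.filter_congr fun j hj => ?_
  simp [searchesAt, Function.update_of_ne (Finset.ne_of_mem_erase hj)]

variable [DecidableEq Ω]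

lemma mcount_updateCell_of_not_mem (hu : u ∉ π) :
    mcount Part (updateCell s i π T) u = mcount Part s u := by
  unfold mcount
  congr 1
  refine Finset.filter_congr fun j _ => ⟨fun ⟨ρ, hρ, huρ, hs⟩ => ⟨ρ, hρ, huρ, ?_⟩,
    fun ⟨ρ, hρ, huρ, hs⟩ => ⟨ρ, hρ, huρ, ?_⟩⟩
  · rwa [updateCell_of_ne (by rintro ⟨-, rfl⟩; exact hu huρ)] at hs
  · rwa [updateCell_of_ne (by rintro ⟨-, rfl⟩; exact hu huρ)]

variable [Fintype Ω]

lemma mcount_eq_of_mem (hP : IsPartition (Part i)) (hπ : π ∈ Part i) (hu : u ∈ π) :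
    mcount Part s u = othersAt Part s i u + if u ∈ s i π then 1 else 0 := by
  rw [mcount_eq_othersAt_add (i := i), if_congr (searchesAt_iff_mem hP hπ hu) rfl rfl]

lemma mcount_updateCell_of_mem (hP : IsPartition (Part i)) (hπ : π ∈ Part i) (hu : u ∈ π) :
    mcount Part (updateCell s i π T) u + (if u ∈ s i π then 1 else 0) =
      mcount Part s u + if u ∈ T then 1 else 0 := by
  rw [mcount_eq_of_mem hP hπ hu, mcount_eq_of_mem hP hπ hu, updateCell, othersAt_update]
  simp only [Function.update_self]
  ring

lemma mcount_updateCell_insert (hP : IsPartition (Part i)) (hπ : π ∈ Part i) {w : Ω}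
    (hw : w ∈ π) (hwS : w ∉ s i π) :
    mcount Part (updateCell s i π (insert w (s i π))) = mcount Part s + Pi.single w 1 := by
  funext u
  by_cases hu : u ∈ π
  · have := mcount_updateCell_of_mem (s := s) (T := insert w (s i π)) hP hπ hu
    by_cases huw : u = w
    · subst huw; simp_all
    · simp_all
  · rw [mcount_updateCell_of_not_mem hu, Pi.add_apply,
      Pi.single_eq_of_ne (by rintro rfl; exact hu hw), add_zero]

lemma mcount_updateCell_erase (hP : IsPartition (Part i)) (hπ : π ∈ Part i) {τ : Ω}
    (hτπ : τ ∈ π) (hτ : τ ∈ s i π) :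
    mcount Part (updateCell s i π ((s i π).erase τ)) + Pi.single τ 1 = mcount Part s := by
  funext u
  by_cases hu : u ∈ π
  · have := mcount_updateCell_of_mem (s := s) (T := (s i π).erase τ) hP hπ hu
    by_cases huτ : u = τ
    · subst huτ; simp_all
    · simp_all
  · rw [Pi.add_apply, mcount_updateCell_of_not_mem hu,
      Pi.single_eq_of_ne (by rintro rfl; exact hu hτπ), add_zero]

lemma mcount_updateCell_swap {w : Ω} (hP : IsPartition (Part i)) (hπ : π ∈ Part i) (huπ : u ∈ π)
    (hu : u ∈ s i π) (hw : w ∈ π) (hwS : w ∉ s i π) :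
    mcount Part (updateCell s i π (insert w ((s i π).erase u))) + Pi.single u 1 =
      mcount Part s + Pi.single w 1 := by
  have hins := mcount_updateCell_insert (s := updateCell s i π ((s i π).erase u)) hP hπ hw
    (by simp [hwS])
  simp only [updateCell_same, updateCell_updateCell] at hins
  rw [hins, add_right_comm, mcount_updateCell_erase hP hπ huπ hu]

end Occupancy

end Profiles

section Payoff

variable {N Ω : Type} [Fintype N] [DecidableEq N] [Fintype Ω] [DecidableEq Ω]
  {Part : N → Finset (Finset Ω)} {μ : Ω → ℝ} {c : N → ℕ → ℝ} {v : N → ℕ → Ω → ℝ}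
  {s t : N → Finset Ω → Finset Ω} {i : N} {π S T : Finset Ω} {u : Ω} {n : Ω → ℕ}

section Values

variable (Part μ c v)

/-- The expected reward to player `i` from location `u` when `S` is its choice in the cell
of `u` and `n u` players search `u`, counting `i` itself when `u ∈ S`. -/
def searchValue (i : N) (n : Ω → ℕ) (S : Finset Ω) (u : Ω) : ℝ :=
  μ u * v i (n u + if u ∈ S then 0 else 1) u

def cellCost (i : N) (π : Finset Ω) (k : ℕ) : ℝ := (∑ x ∈ π, μ x) * c i k

/-- For `n = mcount Part s` this says that `s` is an equilibrium of the game with per-cell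
capacities `κ`; for other `n` it is the invariant of the relocation argument. -/
def IsStable (κ : N → Finset Ω → ℕ) (n : Ω → ℕ) (s : N → Finset Ω → Finset Ω) : Prop :=
  ∀ i, ∀ π ∈ Part i,
    IsCellOptimal π (κ i π) (searchValue μ v i n (s i π)) (cellCost μ c i π) (s i π)

def potential (n : Ω → ℕ) (s : N → Finset Ω → Finset Ω) : ℝ :=
  ∑ i, ∑ π ∈ Part i, ∑ u ∈ s i π, μ u * v i (n u + 1) u

end Values

def numCovered (n : Ω → ℕ) : ℕ := (Finset.univ.filter fun ω => 1 ≤ n ω).card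

omit [DecidableEq Ω] in
lemma numCovered_le {n' : Ω → ℕ} (h : ∀ ω, 1 ≤ n ω → 1 ≤ n' ω) :
    numCovered n ≤ numCovered n' :=
  Finset.card_le_card fun ω hω => by
    simp only [Finset.mem_filter, Finset.mem_univ, true_and] at hω ⊢
    exact h ω hω

lemma searchValue_mcount (hP : IsPartition (Part i)) (hπ : π ∈ Part i) (hu : u ∈ π) :
    searchValue μ v i (mcount Part s) (s i π) u = μ u * v i (othersAt Part s i u + 1) u := by
  rw [searchValue, mcount_eq_of_mem hP hπ hu]
  split_ifs <;> rfl

lemma payoff_update (hP : IsPartition (Part i)) {σ : Finset Ω → Finset Ω}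
    (hσ : ∀ π ∈ Part i, σ π ⊆ π) :
    payoff Part μ c v i (Function.update s i σ) = ∑ π ∈ Part i,
      cellValue (fun u => μ u * v i (othersAt Part s i u + 1) u) (cellCost μ c i π) (σ π) := by
  rw [payoff, hP.sum_eq_sum_sum]
  refine Finset.sum_congr rfl fun π hπ => ?_
  have hcell : ∀ ω ∈ π, μ ω * ((if searchesAt Part (Function.update s i σ) i ω then
      v i (mcount Part (Function.update s i σ) ω) ω else 0) -
      ∑ ρ ∈ (Part i).filter (fun ρ => ω ∈ ρ), c i (Function.update s i σ i ρ).card) =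
      (if ω ∈ σ π then μ ω * v i (othersAt Part s i ω + 1) ω else 0) -
        μ ω * c i (σ π).card := by
    intro ω hω
    rw [hP.filter_mem_eq hπ hω, Finset.sum_singleton,
      if_congr (searchesAt_iff_mem hP hπ hω) rfl rfl, Function.update_self]
    split_ifs with h
    · rw [mcount_eq_of_mem hP hπ hω, othersAt_update, Function.update_self, if_pos h]; ring
    · ring
  rw [Finset.sum_congr rfl hcell, Finset.sum_sub_distrib, Finset.sum_ite_mem,
    Finset.inter_eq_right.mpr (hσ π hπ), cellValue, cellCost, Finset.sum_mul]

theorem isNash_of_isStable {K : N → ℕ} (hP : ∀ i, IsPartition (Part i))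
    (hs : IsStable Part μ c v (fun i _ => K i) (mcount Part s) s) : IsNash Part K μ c v s := by
  have hvalid : ValidStrat Part K s := fun i π hπ => ⟨(hs i π hπ).subset, (hs i π hπ).card_le⟩
  refine ⟨hvalid, fun i σ hσ => ?_⟩
  conv_rhs => rw [← Function.update_eq_self i s]
  rw [payoff_update (hP i) fun π hπ => (hσ π hπ).1,
    payoff_update (hP i) fun π hπ => (hvalid i π hπ).1]
  refine Finset.sum_le_sum fun π hπ => ?_
  have hopt := (hs i π hπ).congr fun u hu => searchValue_mcount (hP i) hπ hu
  exact hopt.le (σ π) (hσ π hπ).1 (hσ π hπ).2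

end Payoff

section SearchValue

variable {N Ω : Type} [DecidableEq Ω]
  {Part : N → Finset (Finset Ω)} {μ : Ω → ℝ} {c : N → ℕ → ℝ} {v : N → ℕ → Ω → ℝ}
  {s t : N → Finset Ω → Finset Ω} {i : N} {π S S₀ T : Finset Ω} {u τ : Ω} {n n' : Ω → ℕ}
  {κ : N → Finset Ω → ℕ} {k : ℕ}

lemma searchValue_le_searchValue (hv : Antitone fun m => v i m u) (hμ : 0 ≤ μ u) {S' : Finset Ω}
    (h : n u + (if u ∈ S then 0 else 1) ≤ n' u + if u ∈ S' then 0 else 1) :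
    searchValue μ v i n' S' u ≤ searchValue μ v i n S u :=
  mul_le_mul_of_nonneg_left (hv h) hμ

/-- A player holding the extra searcher at `τ` values the occupancy `n` plus that searcher as
if it had given up `τ`. -/
lemma searchValue_add_single_of_mem (hτS : τ ∈ S) :
    searchValue μ v i (n + Pi.single τ 1) S = searchValue μ v i n (S.erase τ) := by
  funext u
  by_cases hu : u = τ
  · subst hu; simp [searchValue, hτS]
  · simp [searchValue, hu]

lemma IsCellOptimal.searchValue_of_subset
    (hg : Monotone fun k => cellCost μ c i π (k + 1) - cellCost μ c i π k)
    (hv : ∀ u, Antitone fun m => v i m u) (hμ : ∀ u, 0 ≤ μ u)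
    (h : IsCellOptimal π k (searchValue μ v i n S₀) (cellCost μ c i π) S) (hS₀ : S₀ ⊆ S) :
    IsCellOptimal π k (searchValue μ v i n S) (cellCost μ c i π) S :=
  h.mono hg
    (fun u hu => searchValue_le_searchValue (hv u) (hμ u) (by split_ifs <;> omega))
    fun u _ hu => searchValue_le_searchValue (hv u) (hμ u)
      (by rw [if_neg hu, if_neg fun h => hu (hS₀ h)])

lemma IsCellOptimal.add_single_of_not_mem
    (hg : Monotone fun k => cellCost μ c i π (k + 1) - cellCost μ c i π k)
    (hv : ∀ u, Antitone fun m => v i m u) (hμ : ∀ u, 0 ≤ μ u)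
    (h : IsCellOptimal π k (searchValue μ v i n S) (cellCost μ c i π) S) (hτS : τ ∉ S) :
    IsCellOptimal π k (searchValue μ v i (n + Pi.single τ 1) S) (cellCost μ c i π) S := by
  refine h.mono hg (fun u hu => le_of_eq ?_) fun u _ _ =>
    searchValue_le_searchValue (hv u) (hμ u) (by simp)
  simp [searchValue, show u ≠ τ from fun h => hτS (h ▸ hu)]

lemma IsStable.updateCell_of_isCellOptimal [DecidableEq N] (hs : IsStable Part μ c v κ n t)
    (hT : IsCellOptimal π k (searchValue μ v i n T) (cellCost μ c i π) T) :
    IsStable Part μ c v (updateCell κ i π k) n (updateCell t i π T) := by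
  intro j ρ hρ
  by_cases h : j = i ∧ ρ = π
  · obtain ⟨rfl, rfl⟩ := h
    simpa using hT
  · rw [updateCell_of_ne h, updateCell_of_ne h]
    exact hs j ρ hρ

lemma IsStable.exists_not_isCellOptimal_of_add_single
    (hg : ∀ i π, Monotone fun k => cellCost μ c i π (k + 1) - cellCost μ c i π k)
    (hv : ∀ i u, Antitone fun m => v i m u) (hμ : ∀ u, 0 ≤ μ u)
    (hs : IsStable Part μ c v κ n t) (hnot : ¬IsStable Part μ c v κ (n + Pi.single τ 1) t) :
    ∃ i, ∃ π ∈ Part i, τ ∈ t i π ∧ ¬IsCellOptimal π (κ i π)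
      (searchValue μ v i n ((t i π).erase τ)) (cellCost μ c i π) (t i π) := by
  simp only [IsStable, not_forall] at hnot
  obtain ⟨i, π, hπ, hnot⟩ := hnot
  have hτS : τ ∈ t i π := by
    by_contra hτS
    exact hnot (IsCellOptimal.add_single_of_not_mem (hg i π) (hv i) hμ (hs i π hπ) hτS)
  exact ⟨i, π, hπ, hτS, searchValue_add_single_of_mem hτS ▸ hnot⟩

end SearchValue

section Relocation

variable {N Ω : Type} [Fintype N] [DecidableEq N] [Fintype Ω] [DecidableEq Ω]
  {Part : N → Finset (Finset Ω)} {μ : Ω → ℝ} {c : N → ℕ → ℝ} {v : N → ℕ → Ω → ℝ}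
  {s t : N → Finset Ω → Finset Ω} {i : N} {π T : Finset Ω} {τ : Ω} {n : Ω → ℕ}
  {κ : N → Finset Ω → ℕ}

omit [Fintype Ω] in
lemma potential_updateCell (hπ : π ∈ Part i) :
    potential Part μ v n (updateCell t i π T) = potential Part μ v n t +
      (∑ u ∈ T, μ u * v i (n u + 1) u - ∑ u ∈ t i π, μ u * v i (n u + 1) u) := by
  unfold potential
  rw [← Finset.add_sum_erase _ _ (Finset.mem_univ i),
    ← Finset.add_sum_erase _ _ (Finset.mem_univ i),
    ← Finset.add_sum_erase _ _ hπ, ← Finset.add_sum_erase _ _ hπ, updateCell_same]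
  have hcells : ∀ ρ ∈ (Part i).erase π, updateCell t i π T i ρ = t i ρ := fun ρ hρ =>
    updateCell_of_ne fun h => Finset.ne_of_mem_erase hρ h.2
  have hplayers : ∀ j ∈ Finset.univ.erase i, updateCell t i π T j = t j := fun j hj =>
    funext fun ρ => updateCell_of_ne fun h => Finset.ne_of_mem_erase hj h.1
  have hi : ∑ ρ ∈ (Part i).erase π, ∑ u ∈ updateCell t i π T i ρ, μ u * v i (n u + 1) u =
      ∑ ρ ∈ (Part i).erase π, ∑ u ∈ t i ρ, μ u * v i (n u + 1) u :=
    Finset.sum_congr rfl fun ρ hρ => by rw [hcells ρ hρ]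
  have hothers : ∑ j ∈ Finset.univ.erase i, ∑ ρ ∈ Part j, ∑ u ∈ updateCell t i π T j ρ,
      μ u * v j (n u + 1) u =
      ∑ j ∈ Finset.univ.erase i, ∑ ρ ∈ Part j, ∑ u ∈ t j ρ, μ u * v j (n u + 1) u :=
    Finset.sum_congr rfl fun j hj => by rw [hplayers j hj]
  rw [hi, hothers]
  ring

/-- A searcher of `τ` that is not optimal gives `τ` up, possibly for a location `w` that then
carries the extra searcher. -/
lemma IsStable.exists_drop_or_swap (hP : ∀ i, IsPartition (Part i))
    (hg : ∀ i π, Monotone fun k => cellCost μ c i π (k + 1) - cellCost μ c i π k)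
    (hv : ∀ i u, Antitone fun m => v i m u) (hμ : ∀ u, 0 ≤ μ u)
    (hs : IsStable Part μ c v κ n t) (ht : mcount Part t = n + Pi.single τ 1) (hπ : π ∈ Part i)
    (hτS : τ ∈ t i π) (hnot : ¬IsCellOptimal π (κ i π)
      (searchValue μ v i n ((t i π).erase τ)) (cellCost μ c i π) (t i π)) :
    (∃ t', IsStable Part μ c v κ n t' ∧ mcount Part t' = n) ∨
      ∃ t' w, IsStable Part μ c v κ n t' ∧ mcount Part t' = n + Pi.single w 1 ∧
        potential Part μ v n t < potential Part μ v n t' := by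
  have hτπ := (hs i π hπ).subset hτS
  obtain ⟨S', hS', hS'cases⟩ := (hs i π hπ).exists_of_update (hg i π) hτS
    (b' := searchValue μ v i n ((t i π).erase τ)) fun u _ hu => by simp [searchValue, hu]
  have hgain : cellValue (searchValue μ v i n ((t i π).erase τ)) (cellCost μ c i π) (t i π) <
      cellValue (searchValue μ v i n ((t i π).erase τ)) (cellCost μ c i π) S' := by
    by_contra hle
    push Not at hle
    exact hnot ⟨(hs i π hπ).subset, (hs i π hπ).card_le,
      fun T hT hTκ => (hS'.le T hT hTκ).trans hle⟩
  have hstable : IsStable Part μ c v κ n (updateCell t i π S') := by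
    have hsub : (t i π).erase τ ⊆ S' := by
      rcases hS'cases with rfl | rfl | ⟨w, -, -, rfl⟩
      exacts [Finset.erase_subset _ _, subset_rfl, Finset.subset_insert _ _]
    simpa using hs.updateCell_of_isCellOptimal
      (IsCellOptimal.searchValue_of_subset (hg i π) (hv i) hμ hS' hsub)
  rcases hS'cases with rfl | rfl | ⟨w, hw, hwS, rfl⟩
  · exact absurd hgain (lt_irrefl _)
  · refine Or.inl ⟨_, hstable, ?_⟩
    have := mcount_updateCell_erase (hP i) hπ hτπ hτS
    rw [ht] at this
    exact add_right_cancel this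
  · refine Or.inr ⟨_, w, hstable, ?_, ?_⟩
    · have := mcount_updateCell_swap (hP i) hπ hτπ hτS hw hwS
      rw [ht, add_right_comm] at this
      exact add_right_cancel this
    · rw [cellValue_insert_erase hτS hwS] at hgain
      simp only [searchValue, Finset.mem_erase, ne_eq, not_true_eq_false, false_and,
        if_false, hwS, and_false] at hgain
      rw [potential_updateCell hπ, sum_insert_erase hτS hwS]
      linarith

theorem exists_isStable_of_le_add_single (hP : ∀ i, IsPartition (Part i))
    (hg : ∀ i π, Monotone fun k => cellCost μ c i π (k + 1) - cellCost μ c i π k)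
    (hv : ∀ i u, Antitone fun m => v i m u) (hμ : ∀ u, 0 ≤ μ u)
    (hs : IsStable Part μ c v κ n t)
    (ht : mcount Part t = n ∨ ∃ τ, mcount Part t = n + Pi.single τ 1) :
    ∃ t', IsStable Part μ c v κ (mcount Part t') t' ∧
      numCovered n ≤ numCovered (mcount Part t') := by
  -- relocations increase `potential Part μ v n`, so at a maximizer none is possible
  obtain ⟨t₀, ht₀, hmax⟩ := Finset.exists_max_image
    (Finset.univ.filter fun t => IsStable Part μ c v κ n t ∧
      (mcount Part t = n ∨ ∃ τ, mcount Part t = n + Pi.single τ 1))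
    (potential Part μ v n) ⟨t, by simp [hs, ht]⟩
  simp only [Finset.mem_filter, Finset.mem_univ, true_and] at ht₀ hmax
  obtain ⟨hs₀, h | ⟨τ, hτ⟩⟩ := ht₀
  · exact ⟨t₀, h ▸ hs₀, h ▸ le_rfl⟩
  by_cases hall : IsStable Part μ c v κ (mcount Part t₀) t₀
  · exact ⟨t₀, hall, numCovered_le fun ω h => hτ ▸ h.trans (Nat.le_add_right _ _)⟩
  obtain ⟨i, π, hπ, hτS, hnot⟩ :=
    hs₀.exists_not_isCellOptimal_of_add_single hg hv hμ (hτ ▸ hall)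
  rcases hs₀.exists_drop_or_swap hP hg hv hμ hτ hπ hτS hnot with ⟨t', h', hm⟩ | ⟨t', w, h', hm, hlt⟩
  · exact ⟨t', hm ▸ h', hm ▸ le_rfl⟩
  · exact absurd (hmax t' ⟨h', Or.inr ⟨w, hm⟩⟩) (not_le.mpr hlt)

end Relocation

section Capacities

variable {N Ω : Type} [Fintype N] [DecidableEq N] [Fintype Ω] [DecidableEq Ω]
  {Part : N → Finset (Finset Ω)} {μ : Ω → ℝ} {c : N → ℕ → ℝ} {v : N → ℕ → Ω → ℝ}
  {s : N → Finset Ω → Finset Ω} {i : N} {π : Finset Ω} {κ : N → Finset Ω → ℕ}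

/-- One more unit of capacity in one cell: the player adds its best location, if any, and the
displaced searchers relocate. -/
theorem IsStable.exists_updateCell_succ (hP : ∀ i, IsPartition (Part i))
    (hg : ∀ i π, Monotone fun k => cellCost μ c i π (k + 1) - cellCost μ c i π k)
    (hv : ∀ i u, Antitone fun m => v i m u) (hμ : ∀ u, 0 ≤ μ u)
    (hs : IsStable Part μ c v κ (mcount Part s) s) (hπ : π ∈ Part i) :
    ∃ t, IsStable Part μ c v (updateCell κ i π (κ i π + 1)) (mcount Part t) t ∧
      numCovered (mcount Part s) ≤ numCovered (mcount Part t) := by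
  obtain ⟨S', hS', hS'cases⟩ := (hs i π hπ).exists_succ (hg i π)
  have hS'n := IsCellOptimal.searchValue_of_subset (hg i π) (hv i) hμ hS' (by
    rcases hS'cases with rfl | ⟨w, -, -, rfl⟩
    exacts [subset_rfl, Finset.subset_insert _ _])
  refine exists_isStable_of_le_add_single hP hg hv hμ
    (hs.updateCell_of_isCellOptimal hS'n) ?_
  rcases hS'cases with rfl | ⟨w, hw, hwS, rfl⟩
  · exact Or.inl (by simp)
  · exact Or.inr ⟨w, mcount_updateCell_insert (hP i) hπ hw hwS⟩

omit [Fintype N] [Fintype Ω] in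
lemma le_updateCell_succ {j : N} {ρ : Finset Ω} :
    κ j ρ ≤ updateCell κ i π (κ i π + 1) j ρ := by
  by_cases h : j = i ∧ ρ = π
  · obtain ⟨rfl, rfl⟩ := h
    simp
  · rw [updateCell_of_ne h]

theorem IsStable.exists_isStable_of_le {K : N → ℕ} (hP : ∀ i, IsPartition (Part i))
    (hg : ∀ i π, Monotone fun k => cellCost μ c i π (k + 1) - cellCost μ c i π k)
    (hv : ∀ i u, Antitone fun m => v i m u) (hμ : ∀ u, 0 ≤ μ u)
    (hs : IsStable Part μ c v κ (mcount Part s) s) (hκ : ∀ i, ∀ π ∈ Part i, κ i π ≤ K i) :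
    ∃ t, IsStable Part μ c v (fun i _ => K i) (mcount Part t) t ∧
      numCovered (mcount Part s) ≤ numCovered (mcount Part t) := by
  obtain ⟨d, hd⟩ : ∃ d, ∑ i, ∑ π ∈ Part i, (K i - κ i π) = d := ⟨_, rfl⟩
  induction d using Nat.strong_induction_on generalizing κ s with
  | _ d ih =>
  by_cases hfull : ∀ i, ∀ π ∈ Part i, κ i π = K i
  · exact ⟨s, fun i π hπ => by simpa [hfull i π hπ] using hs i π hπ, le_rfl⟩
  push Not at hfull
  obtain ⟨i, π, hπ, hne⟩ := hfull
  obtain ⟨s', hs', hcov⟩ := hs.exists_updateCell_succ hP hg hv hμ hπ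
  have hκ' : ∀ j, ∀ ρ ∈ Part j, updateCell κ i π (κ i π + 1) j ρ ≤ K j := by
    intro j ρ hρ
    by_cases h : j = i ∧ ρ = π
    · obtain ⟨rfl, rfl⟩ := h
      simpa using lt_of_le_of_ne (hκ j ρ hρ) hne
    · rw [updateCell_of_ne h]; exact hκ j ρ hρ
  have hdec : ∑ j, ∑ ρ ∈ Part j, (K j - updateCell κ i π (κ i π + 1) j ρ) < d := by
    rw [← hd]
    refine Finset.sum_lt_sum (fun j _ => Finset.sum_le_sum fun ρ _ =>
      Nat.sub_le_sub_left le_updateCell_succ _) ⟨i, Finset.mem_univ i, ?_⟩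
    refine Finset.sum_lt_sum (fun ρ _ => Nat.sub_le_sub_left le_updateCell_succ _) ⟨π, hπ, ?_⟩
    have := lt_of_le_of_ne (hκ i π hπ) hne
    simp only [updateCell_same]
    omega
  obtain ⟨t, ht, hcov'⟩ := ih _ hdec hs' hκ' rfl
  exact ⟨t, ht, hcov.trans hcov'⟩

end Capacities

section Costs

variable {N Ω : Type} {μ : Ω → ℝ} {c : N → ℕ → ℝ} {v : N → ℕ → Ω → ℝ} {i : N}
  {π : Finset Ω} {u : Ω}

lemma mul_le_mul_of_div_mul_le {m a b x y : ℝ} (hm : 0 < m) (h : a / m * x ≤ b / m * y) :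
    a * x ≤ b * y := by
  rwa [div_mul_eq_mul_div, div_mul_eq_mul_div, div_le_div_iff_of_pos_right hm] at h

lemma cellCost_sub_le_of_ssd (hc : Monotone fun k => c i (k + 1) - c i k)
    (hπ : 0 < ∑ x ∈ π, μ x) {κ k : ℕ}
    (hssd : c i κ - c i (κ - 1) ≤ (μ u / ∑ x ∈ π, μ x) * v i 1 u) (hk : 1 ≤ k) (hkκ : k ≤ κ) :
    cellCost μ c i π k - cellCost μ c i π (k - 1) ≤ μ u * v i 1 u := by
  have hstep : c i k - c i (k - 1) ≤ c i κ - c i (κ - 1) := by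
    have := hc (Nat.sub_le_sub_right hkκ 1)
    simp only at this
    rwa [Nat.sub_add_cancel hk, Nat.sub_add_cancel (hk.trans hkκ)] at this
  rw [cellCost, cellCost, ← mul_sub]
  refine mul_le_mul_of_div_mul_le hπ ?_
  rw [div_self hπ.ne', one_mul]
  exact hstep.trans hssd

lemma cellCost_sub_monotone (hμ : ∀ u, 0 ≤ μ u) (hc : Monotone fun k => c i (k + 1) - c i k) :
    Monotone fun k => cellCost μ c i π (k + 1) - cellCost μ c i π k := fun _ _ hkl => by
  simp only [cellCost, ← mul_sub]
  exact mul_le_mul_of_nonneg_left (hc hkl) (Finset.sum_nonneg fun x _ => hμ x)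

end Costs

section Solo

variable {N Ω : Type} [Fintype N] [DecidableEq N] [Fintype Ω] [DecidableEq Ω]
  {Part : N → Finset (Finset Ω)} {μ : Ω → ℝ} {c : N → ℕ → ℝ} {v : N → ℕ → Ω → ℝ}
  {K : N → ℕ} {s : N → Finset Ω → Finset Ω} {i : N} {π T : Finset Ω} {u w : Ω}

omit [Fintype N] [Fintype Ω] in
lemma ValidStrat.updateCell (hs : ValidStrat Part K s) (hT : T ⊆ π) (hTK : T.card ≤ K i) :
    ValidStrat Part K (updateCell s i π T) := by
  intro j ρ hρ
  by_cases h : j = i ∧ ρ = π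
  · obtain ⟨rfl, rfl⟩ := h
    simpa using ⟨hT, hTK⟩
  · rw [updateCell_of_ne h]
    exact hs j ρ hρ

omit [Fintype N] [DecidableEq N] in
lemma numCovered_le_of_swap {n n' : Ω → ℕ} (hw : n w = 0) (hw' : 1 ≤ n' w)
    (h : ∀ x, x ≠ u → 1 ≤ n x → 1 ≤ n' x) : numCovered n ≤ numCovered n' := by
  refine Finset.card_le_card_of_injOn (Equiv.swap u w) (fun x hx => ?_)
    (Equiv.swap u w).injective.injOn
  simp only [Finset.coe_filter, Finset.mem_univ, true_and, Set.mem_ofPred_eq] at hx ⊢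
  by_cases hxu : x = u
  · rwa [hxu, Equiv.swap_apply_left]
  · have hxw : x ≠ w := fun h' => by rw [h', hw] at hx; exact absurd hx (by norm_num)
    rw [Equiv.swap_apply_of_ne_of_ne hxu hxw]
    exact h x hxu hx

omit [DecidableEq N] in
/-- Each location is kept only in the choice of its searcher of least index. -/
lemma exists_solo_numCovered_le (hs : ValidStrat Part K s) :
    ∃ s', ValidStrat Part K s' ∧ (∀ u, mcount Part s' u ≤ 1) ∧
      numCovered (mcount Part s) ≤ numCovered (mcount Part s') := by
  let e := Fintype.equivFin N
  obtain ⟨s', hs'⟩ : ∃ s' : N → Finset Ω → Finset Ω, ∀ i π,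
      s' i π = (s i π).filter fun u => ∀ j, searchesAt Part s j u → e i ≤ e j := ⟨_, fun _ _ => rfl⟩
  have hsearch : ∀ i u, searchesAt Part s' i u ↔
      searchesAt Part s i u ∧ ∀ j, searchesAt Part s j u → e i ≤ e j := by
    intro i u
    show (∃ π ∈ Part i, u ∈ π ∧ u ∈ s' i π) ↔ _
    simp only [hs', Finset.mem_filter]
    exact ⟨fun ⟨π, hπ, hu, hus, hmin⟩ => ⟨⟨π, hπ, hu, hus⟩, hmin⟩,
      fun ⟨⟨π, hπ, hu, hus⟩, hmin⟩ => ⟨π, hπ, hu, hus, hmin⟩⟩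
  refine ⟨s', fun i π hπ => ⟨hs' i π ▸ (Finset.filter_subset _ _).trans (hs i π hπ).1,
    hs' i π ▸ (Finset.card_filter_le _ _).trans (hs i π hπ).2⟩, fun u => ?_,
    numCovered_le fun u hu => ?_⟩
  · rw [mcount, Finset.card_le_one]
    intro a ha b hb
    simp only [Finset.mem_filter, Finset.mem_univ, true_and, hsearch] at ha hb
    exact e.injective (Fin.ext (le_antisymm (ha.2 b hb.1) (hb.2 a ha.1)))
  · obtain ⟨j, hj, hmin⟩ := Finset.exists_min_image
      (Finset.univ.filter fun j => searchesAt Part s j u) e (Finset.card_pos.mp hu)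
    simp only [Finset.mem_filter, Finset.mem_univ, true_and] at hj hmin
    exact Finset.card_pos.mpr ⟨j, by simpa [hsearch] using ⟨hj, hmin⟩⟩

end Solo

section MaximalSolo

variable {N Ω : Type} [Fintype N] [DecidableEq N] [Fintype Ω] [DecidableEq Ω]
  {Part : N → Finset (Finset Ω)} {μ : Ω → ℝ} {c : N → ℕ → ℝ} {v : N → ℕ → Ω → ℝ}
  {K : N → ℕ} {s : N → Finset Ω → Finset Ω} {i : N} {π : Finset Ω} {u w : Ω}

lemma one_le_mcount_of_mem (hP : IsPartition (Part i)) (hπ : π ∈ Part i) (hu : u ∈ π)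
    (hus : u ∈ s i π) : 1 ≤ mcount Part s u := by
  rw [mcount_eq_of_mem hP hπ hu, if_pos hus]
  exact Nat.le_add_left 1 _

variable (Part μ v K) in
def IsMaximalSolo (s : N → Finset Ω → Finset Ω) : Prop :=
  ValidStrat Part K s ∧ (∀ u, mcount Part s u ≤ 1) ∧
    ∀ s', ValidStrat Part K s' → (∀ u, mcount Part s' u ≤ 1) →
      toLex (numCovered (mcount Part s'), potential Part μ v 0 s') ≤
        toLex (numCovered (mcount Part s), potential Part μ v 0 s)

lemma exists_isMaximalSolo : ∃ s, IsMaximalSolo Part μ v K s := by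
  obtain ⟨s, hs, hmax⟩ := Finset.exists_max_image
    (Finset.univ.filter fun s => ValidStrat Part K s ∧ ∀ u, mcount Part s u ≤ 1)
    (fun s => toLex (numCovered (mcount Part s), potential Part μ v 0 s))
    ⟨fun _ _ => ∅, Finset.mem_filter.mpr ⟨Finset.mem_univ _,
      fun i π _ => ⟨Finset.empty_subset π, by simp⟩, fun u => by simp [mcount, searchesAt]⟩⟩
  simp only [Finset.mem_filter, Finset.mem_univ, true_and] at hs hmax
  exact ⟨s, hs.1, hs.2, fun s' hs' hsolo' => hmax s' ⟨hs', hsolo'⟩⟩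

omit [DecidableEq N] in
lemma IsMaximalSolo.numCovered_le (h : IsMaximalSolo Part μ v K s)
    {s' : N → Finset Ω → Finset Ω} (hs' : ValidStrat Part K s') :
    numCovered (mcount Part s') ≤ numCovered (mcount Part s) := by
  obtain ⟨s'', hs'', hsolo'', hcov⟩ := exists_solo_numCovered_le hs'
  have := h.2.2 s'' hs'' hsolo''
  rw [Prod.Lex.toLex_le_toLex] at this
  exact hcov.trans (this.elim le_of_lt fun h => h.1.le)

/-- Moving a searcher of a maximal profile from `u` to an uncovered location `w` of its cell
covers as much, so it cannot increase the potential. -/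
lemma IsMaximalSolo.exchange_le (h : IsMaximalSolo Part μ v K s) (hP : ∀ i, IsPartition (Part i))
    (hπ : π ∈ Part i) (hu : u ∈ s i π) (hw : w ∈ π) (hw0 : mcount Part s w = 0) :
    μ w * v i 1 w ≤ μ u * v i 1 u := by
  obtain ⟨hvalid, hsolo, hmax⟩ := h
  have huπ := (hvalid i π hπ).1 hu
  have hwS : w ∉ s i π := fun hwS => by
    have := one_le_mcount_of_mem (hP i) hπ hw hwS; omega
  have hwu : w ≠ u := fun h' => hwS (h' ▸ hu)
  set s' := updateCell s i π (insert w ((s i π).erase u)) with hs'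
  have hcount : ∀ x, mcount Part s' x + (if x = u then 1 else 0) =
      mcount Part s x + if x = w then 1 else 0 := fun x => by
    simpa [Pi.single_apply] using congr_fun (mcount_updateCell_swap (hP i) hπ huπ hu hw hwS) x
  have hsolo' : ∀ x, mcount Part s' x ≤ 1 := fun x => by
    have h₁ := hcount x
    have h₂ := hsolo x
    by_cases hxw : x = w
    · subst hxw; rw [if_neg hwu, if_pos rfl, hw0] at h₁; omega
    · by_cases hxu : x = u
      · rw [if_neg hxw, if_pos hxu] at h₁; omega
      · rw [if_neg hxw, if_neg hxu] at h₁; omega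
  have hcov : numCovered (mcount Part s) ≤ numCovered (mcount Part s') :=
    numCovered_le_of_swap (u := u) hw0 (by have := hcount w; simp [hwu] at this; omega)
      fun x hxu hx => by have := hcount x; rw [if_neg hxu] at this; omega
  have hpot := hmax s' (ValidStrat.updateCell hvalid (Finset.insert_subset hw
    ((Finset.erase_subset _ _).trans (hvalid i π hπ).1))
    ((card_insert_erase hu hwS).trans_le (hvalid i π hπ).2)) hsolo'
  rw [Prod.Lex.toLex_le_toLex] at hpot
  rcases hpot with hlt | ⟨-, hle⟩
  · exact absurd hcov (not_le.mpr hlt)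
  · rw [potential_updateCell hπ, sum_insert_erase hu hwS] at hle
    simp only [Pi.zero_apply, zero_add] at hle
    linarith

theorem IsMaximalSolo.isStable (h : IsMaximalSolo Part μ v K s)
    (hP : ∀ i, IsPartition (Part i)) (hμ : ∀ u, 0 < μ u)
    (hc : ∀ i, Monotone fun k => c i (k + 1) - c i k)
    (hSSD1 : ∀ i, ∀ π ∈ Part i, ∀ ω ∈ π, ∀ ω' ∈ π,
      (μ ω' / ∑ x ∈ π, μ x) * v i 2 ω' ≤ (μ ω / ∑ x ∈ π, μ x) * v i 1 ω)
    (hSSD2 : ∀ i, ∀ π ∈ Part i, ∀ ω ∈ π,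
      c i (K i) - c i (K i - 1) ≤ (μ ω / ∑ x ∈ π, μ x) * v i 1 ω) :
    IsStable Part μ c v (fun i π => (s i π).card) (mcount Part s) s := by
  intro i π hπ
  have hmass : 0 < ∑ x ∈ π, μ x := Finset.sum_pos (fun x _ => hμ x) ((hP i).1 π hπ)
  have hsub := (h.1 i π hπ).1
  have hchosen : ∀ u ∈ s i π, searchValue μ v i (mcount Part s) (s i π) u = μ u * v i 1 u :=
    fun u hu => by
      have := le_antisymm (h.2.1 u) (one_le_mcount_of_mem (hP i) hπ (hsub hu) hu)
      simp [searchValue, hu, this]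
  refine IsLocallyCellOptimal.isCellOptimal
    (cellCost_sub_monotone (fun u => (hμ u).le) (hc i)) ⟨hsub, le_rfl, fun u hu => ?_,
      fun hlt => absurd hlt (lt_irrefl _), fun u hu w hw hwS => ?_⟩
  · rw [hchosen u hu]
    exact cellCost_sub_le_of_ssd (hc i) hmass (hSSD2 i π hπ u (hsub hu))
      (Finset.card_pos.mpr ⟨u, hu⟩) (h.1 i π hπ).2
  · rw [hchosen u hu, searchValue, if_neg hwS]
    rcases Nat.le_one_iff_eq_zero_or_eq_one.mp (h.2.1 w) with h0 | h1
    · rw [h0]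
      exact h.exchange_le hP hπ hu hw h0
    · rw [h1]
      exact mul_le_mul_of_div_mul_le hmass (hSSD1 i π hπ u (hsub hu) w hw)

end MaximalSolo

end SearchGame

theorem exists_location_maximizing_equilibrium_general
    {N Ω : Type} [Fintype N] [DecidableEq N] [Fintype Ω] [DecidableEq Ω]
    (Part : N → Finset (Finset Ω)) (K : N → ℕ) (μ : Ω → ℝ)
    (c : N → ℕ → ℝ) (v : N → ℕ → Ω → ℝ)
    (hPart : ∀ i, IsPartition (Part i))
    (hμ_pos : ∀ ω, 0 < μ ω)
    (hc_convex : ∀ i k, c i (k + 1) - c i k ≤ c i (k + 2) - c i (k + 1))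
    (hv_dec : ∀ i m ω, v i (m + 1) ω ≤ v i m ω)
    -- solitary-search dominance
    (hSSD1 : ∀ i, ∀ π ∈ Part i, ∀ ω ∈ π, ∀ ω' ∈ π,
      (μ ω' / ∑ x ∈ π, μ x) * v i 2 ω' ≤ (μ ω / ∑ x ∈ π, μ x) * v i 1 ω)
    (hSSD2 : ∀ i, ∀ π ∈ Part i, ∀ ω ∈ π,
      c i (K i) - c i (K i - 1) ≤ (μ ω / ∑ x ∈ π, μ x) * v i 1 ω) :
    ∃ s : N → Finset Ω → Finset Ω, IsNash Part K μ c v s ∧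
      ∀ s' : N → Finset Ω → Finset Ω, ValidStrat Part K s' →
        ((Finset.univ : Finset Ω).filter fun ω => 1 ≤ mcount Part s' ω).card ≤
        ((Finset.univ : Finset Ω).filter fun ω => 1 ≤ mcount Part s ω).card := by
  have hμ : ∀ ω, 0 ≤ μ ω := fun ω => (hμ_pos ω).le
  have hc : ∀ i, Monotone fun k => c i (k + 1) - c i k := fun i =>
    monotone_nat_of_le_succ (hc_convex i)
  have hv : ∀ i ω, Antitone fun m => v i m ω := fun i ω =>
    antitone_nat_of_succ_le fun m => hv_dec i m ω
  have hg := fun i π => SearchGame.cellCost_sub_monotone (π := π) hμ (hc i)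
  obtain ⟨s₀, hs₀⟩ := SearchGame.exists_isMaximalSolo (Part := Part) (μ := μ) (v := v) (K := K)
  obtain ⟨s, hs, hcov⟩ := (hs₀.isStable hPart hμ_pos hc hSSD1 hSSD2).exists_isStable_of_le
    hPart hg hv hμ fun i π hπ => (hs₀.1 i π hπ).2
  exact ⟨s, SearchGame.isNash_of_isStable hPart hs,
    fun s' hs' => (hs₀.numCovered_le hs').trans hcov⟩

/-- Every search game with solitary-search dominant payoffs admits a
location-maximizing pure Nash equilibrium: an equilibrium `s` such that the
number of locations searched under `s` is at least the number of locations
searched under any other valid pure profile. -/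
theorem exists_location_maximizing_equilibrium
    {N Ω : Type} [Fintype N] [DecidableEq N] [Fintype Ω] [DecidableEq Ω]
    (Part : N → Finset (Finset Ω)) (K : N → ℕ) (μ : Ω → ℝ)
    (c : N → ℕ → ℝ) (v : N → ℕ → Ω → ℝ)
    (hPart : ∀ i, IsPartition (Part i))
    (hμ_pos : ∀ ω, 0 < μ ω) (hμ_sum : ∑ ω, μ ω = 1)
    (hc0 : ∀ i, c i 0 = 0)
    (hc_mono : ∀ i k, c i k ≤ c i (k + 1))
    (hc_convex : ∀ i k, c i (k + 1) - c i k ≤ c i (k + 2) - c i (k + 1))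
    (hv_nonneg : ∀ i m ω, 0 ≤ v i m ω)
    (hv_dec : ∀ i m ω, v i (m + 1) ω ≤ v i m ω)
    -- solitary-search dominance
    (hSSD1 : ∀ i, ∀ π ∈ Part i, ∀ ω ∈ π, ∀ ω' ∈ π,
      (μ ω' / ∑ x ∈ π, μ x) * v i 2 ω' ≤ (μ ω / ∑ x ∈ π, μ x) * v i 1 ω)
    (hSSD2 : ∀ i, ∀ π ∈ Part i, ∀ ω ∈ π,
      c i (K i) - c i (K i - 1) ≤ (μ ω / ∑ x ∈ π, μ x) * v i 1 ω) :
    ∃ s : N → Finset Ω → Finset Ω, IsNash Part K μ c v s ∧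
      ∀ s' : N → Finset Ω → Finset Ω, ValidStrat Part K s' →
        ((Finset.univ : Finset Ω).filter fun ω => 1 ≤ mcount Part s' ω).card ≤
        ((Finset.univ : Finset Ω).filter fun ω => 1 ≤ mcount Part s ω).card :=
  exists_location_maximizing_equilibrium_general Part K μ c v hPart hμ_pos hc_convex hv_dec hSSD1
    hSSD2
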